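/- Let {Π_j}_{j=0}^{d²-1} be a minimal IC POVM on ℂ^d (d² outcomes spanning the Hermitian matrices). Then {Π_j} is tight IC, i.e. d Σ_j |Π_j⟩⟩⟨⟨Π_j|/tr(Π_j) = α I + β|1⟩⟩⟨⟨1| for some α, β > 0, if and only if there exist positive constants α̃, β̃ such that tr(Π_j Π_k) = α̃ √(tr(Π_j) tr(Π_k)) δ_{jk} + β̃ tr(Π_j) tr(Π_k) for all j, k. Moreover α̃ = α/d and β̃ = β/d. -/

import Mathlib

open Matrix ComplexOrder

noncomputable section

abbrev Mat (d : ℕ) := Matrix (Fin d) (Fin d) ℂ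

/-- The real vector space of Hermitian `d × d` complex matrices. -/
abbrev HermM (d : ℕ) : Submodule ℝ (Mat d) := selfAdjoint.submodule ℝ (Mat d)

/-- The identity matrix as a Hermitian matrix. -/
def hermOne (d : ℕ) : HermM d := ⟨1, IsSelfAdjoint.one (Mat d)⟩

/-- The superoperator `|A⟩⟩⟨⟨B| : X ↦ tr(B X) • A` on Hermitian matrices. -/
def outerSO (d : ℕ) (A B : HermM d) : HermM d →ₗ[ℝ] HermM d :=
  (Complex.reLm ∘ₗ Matrix.traceLinearMap (Fin d) ℝ ℂ ∘ₗ
    LinearMap.mulLeft ℝ (B : Mat d) ∘ₗ (HermM d).subtype).smulRight A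

/-! A minimal IC POVM `{Π_j}` is a basis of the `d²`-dimensional real space of Hermitian
matrices, so two superoperators agree iff their matrices in this basis do. The frame
superoperator `d Σ_j |Π_j⟩⟩⟨⟨Π_j| / tr Π_j` has entries `d tr(Π_j Π_k) / tr Π_j`, while, since
`1 = Σ_j Π_j`, the entries of `α I + β |1⟩⟩⟨⟨1|` are `α δ_jk + β tr Π_k`; comparing them entrywise,
and writing `tr Π_j δ_jk = √(tr Π_j tr Π_k) δ_jk`, gives the stated Gram matrix. -/

open Complex in
def skewAdjoint.equivSelfAdjoint (A : Type*) [AddCommGroup A] [Module ℂ A] [StarAddMonoid A]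
    [StarModule ℂ A] : skewAdjoint A ≃ₗ[ℝ] selfAdjoint A :=
  { skewAdjoint.negISMul with
    invFun a := ⟨I • (a : A), by simp⟩
    left_inv a := by ext; simp [smul_smul]
    right_inv a := by ext; simp [smul_smul] }

theorem two_mul_finrank_selfAdjoint (A : Type*) [AddCommGroup A] [Module ℂ A] [StarAddMonoid A]
    [StarModule ℂ A] [FiniteDimensional ℂ A] :
    2 * Module.finrank ℝ (selfAdjoint A) = Module.finrank ℝ A := by
  have : FiniteDimensional ℝ A := Module.Finite.trans ℂ A
  have e := (StarModule.decomposeProdAdjoint ℝ A).trans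
    ((LinearEquiv.refl ℝ _).prodCongr (skewAdjoint.equivSelfAdjoint A))
  have : FiniteDimensional ℝ (selfAdjoint A) :=
    FiniteDimensional.finiteDimensional_submodule (selfAdjoint.submodule ℝ A)
  rw [e.finrank_eq, Module.finrank_prod, two_mul]

theorem finrank_selfAdjoint_matrix (n : Type*) [Fintype n] :
    Module.finrank ℝ (selfAdjoint.submodule ℝ (Matrix n n ℂ)) = Fintype.card n ^ 2 := by
  have h := two_mul_finrank_selfAdjoint (Matrix n n ℂ)
  rw [Module.finrank_matrix, Complex.finrank_real_complex] at h
  change Module.finrank ℝ (selfAdjoint (Matrix n n ℂ)) = _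
  linarith

theorem Submodule.span_range_eq_top_of_forall_mem_span_coe {R M ι : Type*} [Semiring R]
    [AddCommMonoid M] [Module R M] [Fintype ι] {p : Submodule R M} (v : ι → p)
    (h : ∀ x ∈ p, x ∈ span R (Set.range fun i => (v i : M))) :
    span R (Set.range v) = ⊤ := by
  refine eq_top_iff'.2 fun x => ?_
  obtain ⟨c, hc⟩ := (mem_span_range_iff_exists_fun R).1 (h x x.2)
  exact (mem_span_range_iff_exists_fun R).2 ⟨c, Subtype.ext (by simpa using hc)⟩

section OuterSO

variable {d : ℕ} {ι : Type*} [Fintype ι] [DecidableEq ι] (b : Module.Basis ι ℝ (HermM d))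

theorem outerSO_apply (A B X : HermM d) :
    outerSO d A B X = (trace ((B : Mat d) * (X : Mat d))).re • A := rfl

theorem toMatrix_outerSO (A B : HermM d) (j k : ι) :
    LinearMap.toMatrix b b (outerSO d A B) j k =
      (trace ((B : Mat d) * (b k : Mat d))).re * b.repr A j := by
  simp [LinearMap.toMatrix_apply, outerSO_apply]

theorem toMatrix_sum_smul_outerSO_self (w : ι → ℝ) (j k : ι) :
    LinearMap.toMatrix b b (∑ i, w i • outerSO d (b i) (b i)) j k =
      w j * (trace ((b j : Mat d) * (b k : Mat d))).re := by
  simp [Matrix.sum_apply, toMatrix_outerSO, Finsupp.single_apply]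

theorem toMatrix_smul_id_add_smul_outerSO_one (hb : ∑ i, (b i : Mat d) = 1) (α β : ℝ)
    (j k : ι) :
    LinearMap.toMatrix b b (α • LinearMap.id + β • outerSO d (hermOne d) (hermOne d)) j k =
      α * (1 : Matrix ι ι ℝ) j k + β * (trace (b k : Mat d)).re := by
  have hone : hermOne d = ∑ i, b i := Subtype.ext <| by
    rw [AddSubmonoidClass.coe_finsetSum, hb]; rfl
  simp [toMatrix_outerSO, hone, Finsupp.single_apply, hb]

end OuterSO

theorem mul_sqrt_mul_mul_ite_eq {ι : Type*} [DecidableEq ι] {t : ι → ℝ} (ht : ∀ i, 0 ≤ t i)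
    (c : ℝ) (j k : ι) :
    c * √(t j * t k) * (if j = k then 1 else 0) = c * t j * (if j = k then 1 else 0) := by
  split_ifs with h
  · rw [h, Real.sqrt_mul_self (ht k)]
  · simp

theorem mul_inv_mul_eq_iff_eq_div_mul {d t g c : ℝ} (hd : d ≠ 0) (ht : t ≠ 0) :
    d * (t⁻¹ * g) = c ↔ g = t / d * c := by
  constructor <;> rintro rfl <;> field_simp

theorem minimal_tightIC_characterization_general (d : ℕ) (hd : 2 ≤ d)
    (P : Fin (d ^ 2) → HermM d)
    (htrpos : ∀ j, 0 < (Matrix.trace (P j : Mat d)).re)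
    (hsum : ∑ j, (P j : Mat d) = 1)
    (hIC : ∀ A : Mat d, A.IsHermitian →
      A ∈ Submodule.span ℝ (Set.range fun j => (P j : Mat d))) :
    ∀ α β : ℝ, 0 < α → 0 < β →
      (((d : ℝ) • ∑ j, ((Matrix.trace (P j : Mat d)).re)⁻¹ • outerSO d (P j) (P j) =
          α • LinearMap.id + β • outerSO d (hermOne d) (hermOne d)) ↔
        (∀ j k, (Matrix.trace ((P j : Mat d) * (P k : Mat d))).re =
          (α / d) * Real.sqrt ((Matrix.trace (P j : Mat d)).re *
            (Matrix.trace (P k : Mat d)).re) * (if j = k then 1 else 0) +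
          (β / d) * (Matrix.trace (P j : Mat d)).re * (Matrix.trace (P k : Mat d)).re)) := by
  intro α β _ _
  have hd0 : (d : ℝ) ≠ 0 := by norm_cast; omega
  have hspan := Submodule.span_range_eq_top_of_forall_mem_span_coe P hIC
  have hcard : Fintype.card (Fin (d ^ 2)) = Module.finrank ℝ (HermM d) := by
    rw [Fintype.card_fin, finrank_selfAdjoint_matrix, Fintype.card_fin]
  obtain ⟨b, rfl⟩ : ∃ b : Module.Basis (Fin (d ^ 2)) ℝ (HermM d), ⇑b = P :=
    ⟨_, coe_basisOfTopLeSpanOfCardEqFinrank P hspan.ge hcard⟩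
  rw [← (LinearMap.toMatrix b b).injective.eq_iff, ← Matrix.ext_iff]
  refine forall₂_congr fun j k => ?_
  rw [map_smul, Matrix.smul_apply, toMatrix_sum_smul_outerSO_self,
    toMatrix_smul_id_add_smul_outerSO_one b hsum, smul_eq_mul,
    mul_inv_mul_eq_iff_eq_div_mul hd0 (htrpos j).ne',
    mul_sqrt_mul_mul_ite_eq (fun i => (htrpos i).le), one_apply]
  exact iff_of_eq (congrArg (_ = ·) (by ring))

/-- A minimal IC POVM {Π_j}_{j=0}^{d²-1} is tight IC with frame
superoperator αI + β|1⟩⟩⟨⟨1| (α, β > 0) iff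
tr(Π_j Π_k) = (α/d)√(tr Π_j tr Π_k) δ_{jk} + (β/d) tr Π_j tr Π_k for all j, k;
i.e. the constants are α̃ = α/d, β̃ = β/d. -/
theorem minimal_tightIC_characterization (d : ℕ) (hd : 2 ≤ d)
    (P : Fin (d ^ 2) → HermM d)
    (hpsd : ∀ j, ((P j : Mat d)).PosSemidef)
    (htrpos : ∀ j, 0 < (Matrix.trace (P j : Mat d)).re)
    (hsum : ∑ j, (P j : Mat d) = 1)
    (hIC : ∀ A : Mat d, A.IsHermitian →
      A ∈ Submodule.span ℝ (Set.range fun j => (P j : Mat d))) :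
    ∀ α β : ℝ, 0 < α → 0 < β →
      (((d : ℝ) • ∑ j, ((Matrix.trace (P j : Mat d)).re)⁻¹ • outerSO d (P j) (P j) =
          α • LinearMap.id + β • outerSO d (hermOne d) (hermOne d)) ↔
        (∀ j k, (Matrix.trace ((P j : Mat d) * (P k : Mat d))).re =
          (α / d) * Real.sqrt ((Matrix.trace (P j : Mat d)).re *
            (Matrix.trace (P k : Mat d)).re) * (if j = k then 1 else 0) +
          (β / d) * (Matrix.trace (P j : Mat d)).re * (Matrix.trace (P k : Mat d)).re)) :=
  minimal_tightIC_characterization_general d hd P htrpos hsum hIC
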